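/- Let f : ℝ → ℝ be C² and A > 0 with A = ∫_{-π}^{π} cos(y) f(A cos y) dy, and γ = ∫_{-π}^{π} f'(A cos x) dx - 2. Then ∫_{-π}^{π} cos(y) sin(y) f''(A cos y) (-A sin y) dy = -γ. -/

import Mathlib

/-!
Integrating by parts against `sin`, the fixed-point equation
`A = ∫ cos y f(A cos y)` becomes `A = A ∫ sin² y f'(A cos y)`, so `∫ sin² y f'(A cos y) = 1`.
Writing `-A sin y f''(A cos y) = d/dy f'(A cos y)` and integrating by parts against
`cos y sin y`, the integral in question is `-∫ (cos² y - sin² y) f'(A cos y)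
= -(∫ f'(A cos y) - 2 ∫ sin² y f'(A cos y)) = -(∫ f'(A cos y) - 2)`.
All boundary terms vanish because `sin (±π) = 0`.
-/

open Real MeasureTheory

theorem intervalIntegral.integral_mul_deriv_eq_neg_deriv_mul_of_eq_zero
    {u v u' v' : ℝ → ℝ} {a b : ℝ}
    (hu : ∀ x, HasDerivAt u (u' x) x) (hv : ∀ x, HasDerivAt v (v' x) x)
    (hu' : Continuous u') (hv' : Continuous v') (ha : u a * v a = 0) (hb : u b * v b = 0) :
    ∫ x in a..b, u x * v' x = -∫ x in a..b, u' x * v x := by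
  rw [intervalIntegral.integral_mul_deriv_eq_deriv_mul (fun x _ => hu x) (fun x _ => hv x)
    (hu'.intervalIntegrable _ _) (hv'.intervalIntegrable _ _), ha, hb, sub_zero, zero_sub]

theorem intervalIntegral.integral_cos_sq_sub_sin_sq_mul {h : ℝ → ℝ} (hh : Continuous h)
    (a b : ℝ) :
    ∫ x in a..b, (cos x ^ 2 - sin x ^ 2) * h x =
      (∫ x in a..b, h x) - 2 * ∫ x in a..b, sin x ^ 2 * h x := by
  have hsin : Continuous fun x => sin x ^ 2 * h x := by fun_prop
  calc ∫ x in a..b, (cos x ^ 2 - sin x ^ 2) * h x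
      = ∫ x in a..b, (h x - 2 * (sin x ^ 2 * h x)) :=
        intervalIntegral.integral_congr fun x _ => by
          linear_combination h x * cos_sq_add_sin_sq x
    _ = (∫ x in a..b, h x) - 2 * ∫ x in a..b, sin x ^ 2 * h x := by
        rw [intervalIntegral.integral_sub (hh.intervalIntegrable _ _)
          ((hsin.const_mul 2).intervalIntegrable _ _), intervalIntegral.integral_const_mul]

theorem hasDerivAt_comp_const_mul_cos {g : ℝ → ℝ} (A : ℝ) {y : ℝ}
    (hg : DifferentiableAt ℝ g (A * cos y)) :
    HasDerivAt (fun y => g (A * cos y)) (deriv g (A * cos y) * -(A * sin y)) y :=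
  (hg.hasDerivAt.comp y ((hasDerivAt_cos y).const_mul A)).congr_deriv (by ring)

theorem integral_cos_mul_comp_const_mul_cos {f : ℝ → ℝ} (hf : ContDiff ℝ 1 f) (A : ℝ) :
    ∫ y in (-π)..π, cos y * f (A * cos y) =
      A * ∫ y in (-π)..π, sin y ^ 2 * deriv f (A * cos y) := by
  have hdf := hf.continuous_deriv le_rfl
  calc ∫ y in (-π)..π, cos y * f (A * cos y)
      = ∫ y in (-π)..π, f (A * cos y) * cos y := by simp only [mul_comm]
    _ = -∫ y in (-π)..π, deriv f (A * cos y) * -(A * sin y) * sin y :=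
        intervalIntegral.integral_mul_deriv_eq_neg_deriv_mul_of_eq_zero
          (fun y => hasDerivAt_comp_const_mul_cos A (hf.differentiable one_ne_zero _))
          hasDerivAt_sin (by fun_prop) continuous_cos (by simp) (by simp)
    _ = A * ∫ y in (-π)..π, sin y ^ 2 * deriv f (A * cos y) := by
        rw [← intervalIntegral.integral_const_mul, ← intervalIntegral.integral_neg]
        congr 1; ext y; ring

theorem integral_cos_mul_sin_mul_deriv_comp_const_mul_cos {g : ℝ → ℝ} (hg : ContDiff ℝ 1 g)
    (A : ℝ) :
    ∫ y in (-π)..π, cos y * sin y * deriv g (A * cos y) * -(A * sin y) =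
      -∫ y in (-π)..π, (cos y ^ 2 - sin y ^ 2) * g (A * cos y) := by
  have hdg := hg.continuous_deriv le_rfl
  calc ∫ y in (-π)..π, cos y * sin y * deriv g (A * cos y) * -(A * sin y)
      = ∫ y in (-π)..π, cos y * sin y * (deriv g (A * cos y) * -(A * sin y)) := by
        simp only [mul_assoc]
    _ = -∫ y in (-π)..π, (-sin y * sin y + cos y * cos y) * g (A * cos y) :=
        intervalIntegral.integral_mul_deriv_eq_neg_deriv_mul_of_eq_zero
          (fun y => (hasDerivAt_cos y).mul (hasDerivAt_sin y))
          (fun y => hasDerivAt_comp_const_mul_cos A (hg.differentiable one_ne_zero _))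
          (by fun_prop) (by fun_prop) (by simp) (by simp)
    _ = -∫ y in (-π)..π, (cos y ^ 2 - sin y ^ 2) * g (A * cos y) := by
        congr 2; ext y; ring

theorem stmt_17 (f : ℝ → ℝ) (hf : ContDiff ℝ 2 f) (A : ℝ) (hA : 0 < A)
    (hfix : A = ∫ y in (-π)..π, Real.cos y * f (A * Real.cos y)) :
    (∫ y in (-π)..π,
        Real.cos y * Real.sin y * deriv (deriv f) (A * Real.cos y) * (-(A * Real.sin y))) =
      -((∫ x in (-π)..π, deriv f (A * Real.cos x)) - 2) := by
  have hf' : ContDiff ℝ 1 (deriv f) := hf.deriv'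
  have hf'_cont := hf'.continuous
  have hsin_sq : ∫ y in (-π)..π, sin y ^ 2 * deriv f (A * cos y) = 1 := by
    rw [integral_cos_mul_comp_const_mul_cos (hf.of_le one_le_two) A] at hfix
    exact (mul_eq_left₀ hA.ne').mp hfix.symm
  rw [integral_cos_mul_sin_mul_deriv_comp_const_mul_cos hf' A,
    intervalIntegral.integral_cos_sq_sub_sin_sq_mul (by fun_prop),
    hsin_sq, mul_one]
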